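/- arXiv:2007.07507 — 4 statements merged into one kernel-verified Lean document; each statement's English description precedes it below -/
import Mathlib

section
/- Let P ∈ ℝ^{m×n} be a row stochastic matrix with minimum entry ν = min_{x,y} P(x,y), and let q = m ≥ 2. If 0 ≤ δ ≤ ν / (1 - ν + ν/(q-1)), then there exists a row stochastic matrix Q ∈ ℝ^{q×n} such that P = S_δ · Q, i.e., P is a degraded version of the q-ary symmetric channel with parameter δ. -/
/-- A matrix is row stochastic if all entries are nonnegative and each row sums to 1. -/
def RowStochastic {X Z : Type*} [Fintype Z] (A : X → Z → ℝ) : Prop :=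
  (∀ x z, 0 ≤ A x z) ∧ ∀ x, ∑ z, A x z = 1

/-- The q-ary symmetric channel matrix. -/
noncomputable def symCh (q : ℕ) (δ : ℝ) : Matrix (Fin q) (Fin q) ℝ :=
  Matrix.of fun i j => if i = j then 1 - δ else δ / (q - 1)

/-!
Write `S_δ = c • 1 + a • J` with `a = δ / (q - 1)`, `c = 1 - δ - a` and `J` the all-ones matrix.
If the minimum entry satisfies `ν ≥ 1/2`, all rows of `P` coincide and `S_δ * P = P`. Otherwise
the bound on `δ` forces `c > 0`, so `S_δ` is invertible, its inverse being the symmetric-channel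
matrix `S_{-δ/c}`, and `Q = S_δ⁻¹ * P` has unit row sums and entries `(P x y - a ∑ᵢ P i y) / c`.
These are nonnegative: the column sum is at most `P x y + (q - 1)(1 - ν)`, and the bound on `δ`
reads `δ (1 - ν) + a ν ≤ ν ≤ P x y`.
-/

open Finset Matrix

section SymmetricChannel

variable {q : ℕ} (δ : ℝ)

theorem symCh_transpose : (symCh q δ)ᵀ = symCh q δ := by
  ext i j
  simp only [transpose_apply, symCh, of_apply, eq_comm]

theorem sum_symCh_apply_right (hq : q ≠ 1) (i : Fin q) : ∑ j, symCh q δ i j = 1 := by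
  have hq' : ((q : ℝ) - 1) ≠ 0 := sub_ne_zero.2 (by exact_mod_cast hq)
  simp only [symCh, of_apply]
  rw [← add_sum_erase _ _ (mem_univ i), if_pos rfl,
    sum_congr rfl fun j hj => if_neg (ne_of_mem_erase hj).symm, sum_const,
    card_erase_of_mem (mem_univ i), card_univ, Fintype.card_fin, nsmul_eq_mul,
    Nat.cast_sub i.pos, Nat.cast_one]
  field_simp
  ring

theorem sum_symCh_apply_left (hq : q ≠ 1) (j : Fin q) : ∑ i, symCh q δ i j = 1 := by
  conv_lhs => rw [← symCh_transpose]
  exact sum_symCh_apply_right δ hq j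

theorem symCh_mul_apply {ι : Type*} (Q : Matrix (Fin q) ι ℝ) (x : Fin q) (y : ι) :
    (symCh q δ * Q) x y = (1 - δ - δ / (q - 1)) * Q x y + δ / (q - 1) * ∑ i, Q i y := by
  have hentry : ∀ i, symCh q δ x i * Q i y =
      (if x = i then (1 - δ - δ / (q - 1)) * Q i y else 0) + δ / (q - 1) * Q i y := by
    intro i
    simp only [symCh, of_apply]
    split_ifs <;> ring
  rw [mul_apply, sum_congr rfl fun i _ => hentry i, sum_add_distrib, sum_ite_eq, mul_sum,
    if_pos (mem_univ x)]

theorem symCh_mul_symCh_neg_div (hq : q ≠ 1) (hc : 1 - δ - δ / (q - 1) ≠ 0) :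
    symCh q δ * symCh q (-δ / (1 - δ - δ / (q - 1))) = 1 := by
  ext x y
  rw [symCh_mul_apply, sum_symCh_apply_left _ hq]
  simp only [symCh, of_apply, one_apply]
  split_ifs <;>
  · field_simp
    ring

end SymmetricChannel

section MatrixSums

variable {X Y Z : Type*} [Fintype Y]

theorem sum_mul_apply_right_of_sum_eq_one [Fintype Z] {A : Matrix X Y ℝ} {B : Matrix Y Z ℝ}
    (hA : ∀ x, ∑ y, A x y = 1) (hB : ∀ y, ∑ z, B y z = 1) (x : X) :
    ∑ z, (A * B) x z = 1 := by
  simp only [mul_apply]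
  rw [sum_comm]
  simp only [← mul_sum, hB, mul_one, hA]

theorem sum_mul_apply_left_of_sum_eq_one [Fintype X] {A : Matrix X Y ℝ} {B : Matrix Y Z ℝ}
    (hA : ∀ y, ∑ x, A x y = 1) (z : Z) : ∑ x, (A * B) x z = ∑ y, B y z := by
  simp only [mul_apply]
  rw [sum_comm]
  simp only [← sum_mul, hA, one_mul]

theorem mul_eq_self_of_apply_eq {A : Matrix Y Y ℝ} {B : Matrix Y Z ℝ}
    (hA : ∀ x, ∑ y, A x y = 1) (hB : ∀ y y' z, B y z = B y' z) : A * B = B := by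
  ext x z
  simp only [mul_apply, hB _ x z, ← sum_mul, hA, one_mul]

end MatrixSums

section RowStochastic

variable {X Z : Type*} [Fintype Z] {A : X → Z → ℝ}

theorem RowStochastic.add_le_one (hA : RowStochastic A) (x : X) {z z' : Z} (h : z ≠ z') :
    A x z + A x z' ≤ 1 := by
  classical
  rw [← hA.2 x, ← sum_pair h]
  exact sum_le_univ_sum_of_nonneg (hA.1 x)

theorem RowStochastic.nontrivial_of_apply_lt_one (hA : RowStochastic A) {x : X} {z : Z}
    (h : A x z < 1) : Nontrivial Z := by
  by_contra hZ
  rw [not_nontrivial_iff_subsingleton] at hZ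
  rw [← hA.2 x, Fintype.sum_subsingleton _ z] at h
  exact lt_irrefl _ h

theorem RowStochastic.apply_eq_of_one_le_two_mul {ν : ℝ} (hA : RowStochastic A)
    (hν : ∀ x z, ν ≤ A x z) (hν_half : 1 ≤ 2 * ν) (x x' : X) (z : Z) : A x z = A x' z := by
  rcases subsingleton_or_nontrivial Z with hZ | hZ
  · have hone : ∀ x, A x z = 1 := fun x => by rw [← hA.2 x, Fintype.sum_subsingleton _ z]
    rw [hone, hone]
  · obtain ⟨z', hz'⟩ := exists_ne z
    have hhalf : ∀ x, A x z = 1 / 2 := fun x => by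
      linarith [hA.add_le_one x hz'.symm, hν x z, hν x z']
    rw [hhalf, hhalf]

end RowStochastic

theorem sum_le_add_card_sub_one_mul {ι : Type*} [Fintype ι] {f : ι → ℝ} {M : ℝ}
    (hf : ∀ i, f i ≤ M) (i : ι) : ∑ j, f j ≤ f i + (Fintype.card ι - 1) * M := by
  classical
  have : Nonempty ι := ⟨i⟩
  rw [← add_sum_erase _ _ (mem_univ i)]
  gcongr
  have h := sum_le_card_nsmul _ _ _ fun j (_ : j ∈ univ.erase i) => hf j
  rwa [card_erase_of_mem (mem_univ i), card_univ, nsmul_eq_mul,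
    Nat.cast_pred Fintype.card_pos] at h

theorem one_sub_sub_div_pos {r δ ν : ℝ} (hr : 1 ≤ r) (hδ0 : 0 ≤ δ) (hν : 2 * ν < 1)
    (hδ : δ * (1 - ν) + δ / r * ν ≤ ν) : 0 < 1 - δ - δ / r := by
  have ha : δ / r ≤ δ := div_le_self hδ0 hr
  -- `δ (1 - ν) + (δ / r) ν ≥ (δ + δ / r) / 2` because `δ / r ≤ δ` and `ν < 1 / 2`.
  nlinarith [mul_nonneg (sub_nonneg.2 ha) (by linarith : (0 : ℝ) ≤ 1 - 2 * ν)]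

theorem mul_one_sub_add_div_mul_le {r δ ν : ℝ} (hr : 0 < r) (hν0 : 0 ≤ ν) (hν1 : ν < 1)
    (hδ : δ ≤ ν / (1 - ν + ν / r)) : δ * (1 - ν) + δ / r * ν ≤ ν := by
  have := (le_div_iff₀ (by linarith [div_nonneg hν0 hr.le])).1 hδ
  linarith [show δ * (1 - ν + ν / r) = δ * (1 - ν) + δ / r * ν by ring]

theorem RowStochastic.div_mul_sum_apply_le {q : ℕ} {ι : Type*} [Fintype ι] [Nontrivial ι]
    {P : Matrix (Fin q) ι ℝ} {ν δ : ℝ} (hq : 2 ≤ q) (hP : RowStochastic P)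
    (hν : ∀ x y, ν ≤ P x y) (hδ0 : 0 ≤ δ) (ha : δ / (q - 1) ≤ 1)
    (hδ : δ * (1 - ν) + δ / (q - 1) * ν ≤ ν) (x : Fin q) (y : ι) :
    δ / (q - 1) * ∑ i, P i y ≤ P x y := by
  have hq' : (0 : ℝ) < q - 1 := by
    have : (2 : ℝ) ≤ q := by exact_mod_cast hq
    linarith
  obtain ⟨y', hy'⟩ := exists_ne y
  have hcol : ∑ i, P i y ≤ P x y + (q - 1) * (1 - ν) := by
    simpa only [Fintype.card_fin] using sum_le_add_card_sub_one_mul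
      (fun i => by linarith [hP.add_le_one i hy'.symm, hν i y']) x
  calc δ / (q - 1) * ∑ i, P i y
      ≤ δ / (q - 1) * (P x y + (q - 1) * (1 - ν)) := by gcongr
    _ = δ / (q - 1) * P x y + δ * (1 - ν) := by field_simp
    _ ≤ δ / (q - 1) * P x y + (1 - δ / (q - 1)) * ν := by linarith
    _ ≤ δ / (q - 1) * P x y + (1 - δ / (q - 1)) * P x y := by
      have := sub_nonneg.2 ha
      gcongr
      exact hν x y
    _ = P x y := by ring

/-- Degradation by symmetric channels: if `P` is a row stochastic `q × n` matrix with
minimum entry `ν` and `0 ≤ δ ≤ ν/(1 - ν + ν/(q-1))`, then `P` is a degraded version of the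
q-ary symmetric channel with parameter `δ`, i.e., `P = S_δ · Q` for a row stochastic `Q`. -/
theorem degradation_by_symmetric_channels {q n : ℕ} (hq : 2 ≤ q)
    (P : Matrix (Fin q) (Fin n) ℝ) (hP : RowStochastic P) (ν : ℝ)
    (hν_le : ∀ x y, ν ≤ P x y) (hν_attained : ∃ x y, P x y = ν)
    (δ : ℝ) (hδ0 : 0 ≤ δ) (hδ : δ ≤ ν / (1 - ν + ν / ((q : ℝ) - 1))) :
    ∃ Q : Matrix (Fin q) (Fin n) ℝ, RowStochastic Q ∧ P = symCh q δ * Q := by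
  have hq1 : q ≠ 1 := by omega
  by_cases hν_half : 1 ≤ 2 * ν
  · exact ⟨P, hP, (mul_eq_self_of_apply_eq (sum_symCh_apply_right δ hq1)
      (hP.apply_eq_of_one_le_two_mul hν_le hν_half)).symm⟩
  obtain ⟨x₀, y₀, hν_eq⟩ := hν_attained
  have hν0 : 0 ≤ ν := hν_eq ▸ hP.1 x₀ y₀
  have : Nontrivial (Fin n) := hP.nontrivial_of_apply_lt_one (x := x₀) (z := y₀) (by linarith)
  have hq' : (1 : ℝ) ≤ q - 1 := by
    have : (2 : ℝ) ≤ q := by exact_mod_cast hq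
    linarith
  replace hδ := mul_one_sub_add_div_mul_le (by linarith) hν0 (by linarith) hδ
  have hc := one_sub_sub_div_pos hq' hδ0 (not_le.1 hν_half) hδ
  let Q := symCh q (-δ / (1 - δ - δ / (q - 1))) * P
  have hPQ : P = symCh q δ * Q := by
    rw [← Matrix.mul_assoc, symCh_mul_symCh_neg_div δ hq1 hc.ne', Matrix.one_mul]
  refine ⟨Q, ⟨fun x y => ?_, sum_mul_apply_right_of_sum_eq_one (sum_symCh_apply_right _ hq1) hP.2⟩,
    hPQ⟩
  have hQ : (1 - δ - δ / (q - 1)) * Q x y = P x y - δ / (q - 1) * ∑ i, P i y := by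
    have h := congr_fun₂ hPQ x y
    rw [symCh_mul_apply, sum_mul_apply_left_of_sum_eq_one (sum_symCh_apply_left _ hq1)] at h
    linarith
  have hcol := hP.div_mul_sum_apply_le hq hν_le hδ0 (by linarith) hδ x y
  exact (mul_nonneg_iff_of_pos_left hc).1 (by linarith)
end

section
/- A row stochastic matrix P_{Z|X} with input alphabet 𝒳, |𝒳| = q, and output alphabet 𝒴 satisfies the Doeblin minorization condition with parameter η ∈ (0,1) (i.e., there exists a probability distribution Q_Z on 𝒴 such that P_{Z|X}(z|x) ≥ η·Q_Z(z) for all x, z) if and only if P_{Z|X} is a degraded version of the q-ary erasure channel with erasure probability η. -/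
/-- The q-ary erasure channel with erasure probability `η`: input alphabet `X`, output
alphabet `Option X` where `none` is the erasure symbol. -/
noncomputable def erasureCh (X : Type*) [DecidableEq X] (η : ℝ) : X → Option X → ℝ :=
  fun x z => match z with
  | some y => if y = x then 1 - η else 0
  | none => η

/-!
Composing the erasure channel with `W` gives `η W(E, ·) + (1 - η) W(x, ·)` on input `x`.
Hence, if `P` is degraded, `W(E, ·)` is a distribution minorizing every row of `P` with
weight `η`. Conversely, given `η Q ≤ P(x, ·)`, send the erasure to `Q` and an unerased `x`
to the residual `(P(x, ·) - η Q) / (1 - η)`, which is a distribution precisely because of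
the minorization.
-/

section ErasureDegradation

variable {X Y : Type*}

theorem erasureCh_comp_apply [Fintype X] [DecidableEq X] (η : ℝ) (W : Option X → Y → ℝ)
    (x : X) (z : Y) :
    ∑ u, erasureCh X η x u * W u z = η * W none z + (1 - η) * W (some x) z := by
  simp [Fintype.sum_option, erasureCh]

theorem minorization_of_erasureCh_comp [Fintype X] [DecidableEq X] {η : ℝ} (hη1 : η ≤ 1)
    {W : Option X → Y → ℝ} (hW : ∀ u z, 0 ≤ W u z) (x : X) (z : Y) :
    η * W none z ≤ ∑ u, erasureCh X η x u * W u z := by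
  rw [erasureCh_comp_apply]
  nlinarith [hW (some x) z]

noncomputable def doeblinDegradingCh (P : X → Y → ℝ) (Q : Y → ℝ) (η : ℝ) :
    Option X → Y → ℝ
  | none => Q
  | some x => fun z => (P x z - η * Q z) / (1 - η)

variable {P : X → Y → ℝ} {Q : Y → ℝ} {η : ℝ}

theorem rowStochastic_doeblinDegradingCh [Fintype Y] (hP : RowStochastic P) (hη1 : η < 1)
    (hQ0 : ∀ z, 0 ≤ Q z) (hQ1 : ∑ z, Q z = 1) (hQP : ∀ x z, η * Q z ≤ P x z) :
    RowStochastic (doeblinDegradingCh P Q η) := by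
  have h1η : 0 < 1 - η := sub_pos.mpr hη1
  refine ⟨?_, ?_⟩
  · rintro (_ | x) z
    · exact hQ0 z
    · exact div_nonneg (sub_nonneg.mpr (hQP x z)) h1η.le
  · rintro (_ | x)
    · exact hQ1
    · rw [doeblinDegradingCh, ← Finset.sum_div, div_eq_one_iff_eq h1η.ne',
        Finset.sum_sub_distrib, hP.2 x, ← Finset.mul_sum, hQ1, mul_one]

theorem erasureCh_comp_doeblinDegradingCh [Fintype X] [DecidableEq X] (hη : η ≠ 1)
    (x : X) (z : Y) :
    ∑ u, erasureCh X η x u * doeblinDegradingCh P Q η u z = P x z := by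
  rw [erasureCh_comp_apply, doeblinDegradingCh, doeblinDegradingCh,
    mul_div_cancel₀ _ (sub_ne_zero.mpr hη.symm)]
  ring

end ErasureDegradation

theorem doeblin_iff_degraded_erasure_general {X Y : Type*} [Fintype X] [Fintype Y] [DecidableEq X]
    (P : X → Y → ℝ) (hP : RowStochastic P) (η : ℝ) (hη1 : η < 1) :
    (∃ Q : Y → ℝ, (∀ z, 0 ≤ Q z) ∧ (∑ z, Q z = 1) ∧ ∀ x z, η * Q z ≤ P x z) ↔
    (∃ W : Option X → Y → ℝ, RowStochastic W ∧
      ∀ x z, P x z = ∑ u, erasureCh X η x u * W u z) := by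
  constructor
  · rintro ⟨Q, hQ0, hQ1, hQP⟩
    exact ⟨doeblinDegradingCh P Q η, rowStochastic_doeblinDegradingCh hP hη1 hQ0 hQ1 hQP,
      fun x z => (erasureCh_comp_doeblinDegradingCh hη1.ne x z).symm⟩
  · rintro ⟨W, ⟨hW0, hW1⟩, hWP⟩
    refine ⟨W none, hW0 none, hW1 none, fun x z => ?_⟩
    rw [hWP x z]
    exact minorization_of_erasureCh_comp hη1.le hW0 x z

/-- Doeblin minorization is equivalent to degradation by an erasure channel: a row
stochastic matrix `P` satisfies `Doeblin(Q_Z, η)` for some distribution `Q_Z` and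
`η ∈ (0,1)` if and only if `P` is a degraded version of the q-ary erasure channel with
erasure probability `η`. -/
theorem doeblin_iff_degraded_erasure {X Y : Type*} [Fintype X] [Fintype Y] [DecidableEq X]
    (P : X → Y → ℝ) (hP : RowStochastic P) (η : ℝ) (hη0 : 0 < η) (hη1 : η < 1) :
    (∃ Q : Y → ℝ, (∀ z, 0 ≤ Q z) ∧ (∑ z, Q z = 1) ∧ ∀ x z, η * Q z ≤ P x z) ↔
    (∃ W : Option X → Y → ℝ, RowStochastic W ∧
      ∀ x z, P x z = ∑ u, erasureCh X η x u * W u z) :=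
  doeblin_iff_degraded_erasure_general P hP η hη1
end

section
/- Second moment method for total variation distance: let P_X, Q_X be probability distributions on a finite set 𝒳 and let X₁,…,Xₙ be drawn i.i.d. from P_X or from Q_X depending on a uniform binary hypothesis H. Then the total variation distance between the n-fold product distributions satisfies ‖P_X^{⊗n} − Q_X^{⊗n}‖_TV ≥ ‖P_X − Q_X‖₂² / (4 · Σ_{x∈𝒳} Var(P̂_{X₁ⁿ}(x))), where P̂_{X₁ⁿ}(x) = (1/n)Σᵢ 1{Xᵢ = x} is the empirical frequency of x, and the variance is taken under the mixture distribution (P_X^{⊗n} + Q_X^{⊗n})/2. -/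
/-- `P` is a probability distribution on a finite set. -/
def IsProb {X : Type*} [Fintype X] (P : X → ℝ) : Prop :=
  (∀ x, 0 ≤ P x) ∧ ∑ x, P x = 1

/-- The n-fold product (i.i.d.) distribution. -/
def prodD {X : Type*} (P : X → ℝ) (n : ℕ) : (Fin n → X) → ℝ :=
  fun xs => ∏ i, P (xs i)

/-- Empirical frequency of the symbol `x` in the sequence `xs`. -/
noncomputable def empFreq {X : Type*} [DecidableEq X] {n : ℕ} (xs : Fin n → X) (x : X) : ℝ :=
  (1 / (n : ℝ)) * (Finset.univ.filter fun i => xs i = x).card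

/-- Expectation of `f` under the distribution `μ` on sequences. -/
def expect {X : Type*} [Fintype X] {n : ℕ} (μ : (Fin n → X) → ℝ)
    (f : (Fin n → X) → ℝ) : ℝ :=
  ∑ xs, μ xs * f xs

/-- Variance of `f` under the distribution `μ` on sequences. -/
def varOf {X : Type*} [Fintype X] {n : ℕ} (μ : (Fin n → X) → ℝ)
    (f : (Fin n → X) → ℝ) : ℝ :=
  expect μ (fun xs => f xs ^ 2) - (expect μ f) ^ 2

/-!
The empirical frequency of `x` has mean `P x` under `P^{⊗n}` and `Q x` under `Q^{⊗n}`. For any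
statistic `f` with mean `m` under the mixture `μ = (P^{⊗n} + Q^{⊗n}) / 2`, the difference of its
means is `∑ (P^{⊗n} - Q^{⊗n}) (f - m)`, and Cauchy–Schwarz with weights `|P^{⊗n} - Q^{⊗n}| ≤ 2μ`
bounds its square by `2 ∑ |P^{⊗n} - Q^{⊗n}| · Var_μ f`. Summing over `x` gives the theorem.
-/

open Finset hiding expect

section SecondMoment

lemma empFreq_eq_sum {X : Type*} [DecidableEq X] {n : ℕ} (xs : Fin n → X) (x : X) :
    empFreq xs x = (n : ℝ)⁻¹ * ∑ i, if xs i = x then 1 else 0 := by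
  rw [empFreq, natCast_card_filter, one_div]

variable {X : Type*} [Fintype X] {n : ℕ}

section Variance

variable (μ f : (Fin n → X) → ℝ)

lemma varOf_eq_expect_sub_sq (hμ : ∑ xs, μ xs = 1) :
    varOf μ f = expect μ (fun xs => (f xs - expect μ f) ^ 2) := by
  simp only [varOf, expect]
  set m := ∑ xs, μ xs * f xs
  have expand : ∀ xs,
      μ xs * (f xs - m) ^ 2 = μ xs * f xs ^ 2 - 2 * m * (μ xs * f xs) + m ^ 2 * μ xs :=
    fun xs => by ring
  rw [sum_congr rfl fun xs _ => expand xs, sum_add_distrib, sum_sub_distrib, ← mul_sum, ← mul_sum,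
    hμ]
  ring

lemma varOf_nonneg (hμ0 : ∀ xs, 0 ≤ μ xs) (hμ : ∑ xs, μ xs = 1) : 0 ≤ varOf μ f := by
  rw [varOf_eq_expect_sub_sq μ f hμ]
  exact sum_nonneg fun xs _ => mul_nonneg (hμ0 xs) (sq_nonneg _)

end Variance

lemma sum_mix_eq_one {p q : (Fin n → X) → ℝ} (hp : ∑ xs, p xs = 1) (hq : ∑ xs, q xs = 1) :
    ∑ xs, (p xs + q xs) / 2 = 1 := by
  rw [← sum_div, sum_add_distrib, hp, hq]
  norm_num

theorem sq_expect_sub_expect_le (p q f : (Fin n → X) → ℝ) (hp0 : ∀ xs, 0 ≤ p xs)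
    (hq0 : ∀ xs, 0 ≤ q xs) (hp : ∑ xs, p xs = 1) (hq : ∑ xs, q xs = 1) :
    (expect p f - expect q f) ^ 2 ≤
      2 * (∑ xs, |p xs - q xs|) * varOf (fun xs => (p xs + q xs) / 2) f := by
  set μ : (Fin n → X) → ℝ := fun xs => (p xs + q xs) / 2
  set m := expect μ f
  have hμ : ∑ xs, μ xs = 1 := sum_mix_eq_one hp hq
  have centered : expect p f - expect q f = ∑ xs, (p xs - q xs) * (f xs - m) := by
    have split : ∀ xs, (p xs - q xs) * (f xs - m) = p xs * f xs - q xs * f xs - m * (p xs - q xs) :=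
      fun xs => by ring
    rw [sum_congr rfl fun xs _ => split xs, sum_sub_distrib, sum_sub_distrib, ← mul_sum,
      sum_sub_distrib, hp, hq, sub_self, mul_zero, sub_zero]
    rfl
  have cauchy_schwarz : (∑ xs, (p xs - q xs) * (f xs - m)) ^ 2 ≤
      (∑ xs, |p xs - q xs|) * ∑ xs, |p xs - q xs| * (f xs - m) ^ 2 :=
    sum_sq_le_sum_mul_sum_of_sq_le_mul _ (fun xs _ => abs_nonneg _)
      (fun xs _ => mul_nonneg (abs_nonneg _) (sq_nonneg _))
      (fun xs _ => by rw [← mul_assoc, abs_mul_abs_self, mul_pow, sq])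
  have domination : ∑ xs, |p xs - q xs| * (f xs - m) ^ 2 ≤ 2 * varOf μ f := by
    rw [varOf_eq_expect_sub_sq μ f hμ, expect, mul_sum]
    refine sum_le_sum fun xs _ => ?_
    have : |p xs - q xs| ≤ 2 * μ xs := by
      rw [abs_le]; constructor <;> simp only [μ] <;> linarith [hp0 xs, hq0 xs]
    rw [← mul_assoc]
    exact mul_le_mul_of_nonneg_right this (sq_nonneg _)
  calc (expect p f - expect q f) ^ 2
      ≤ (∑ xs, |p xs - q xs|) * ∑ xs, |p xs - q xs| * (f xs - m) ^ 2 := centered ▸ cauchy_schwarz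
    _ ≤ (∑ xs, |p xs - q xs|) * (2 * varOf μ f) := by gcongr
    _ = 2 * (∑ xs, |p xs - q xs|) * varOf μ f := by ring

lemma IsProb.prodD_nonneg {P : X → ℝ} (hP : IsProb P) (xs : Fin n → X) : 0 ≤ prodD P n xs :=
  prod_nonneg fun i _ => hP.1 (xs i)

lemma IsProb.sum_prodD {P : X → ℝ} (hP : IsProb P) : ∑ xs, prodD P n xs = 1 := by
  simp [prodD, ← Fintype.prod_sum, hP.2]

variable [DecidableEq X]

lemma IsProb.sum_prodD_mul_ite {P : X → ℝ} (hP : IsProb P) (i : Fin n) (x : X) :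
    ∑ xs : Fin n → X, prodD P n xs * (if xs i = x then 1 else 0) = P x := by
  set g : Fin n → X → ℝ := fun j y => P y * if j = i then (if y = x then 1 else 0) else 1
  have factor : ∀ xs : Fin n → X, prodD P n xs * (if xs i = x then 1 else 0) = ∏ j, g j (xs j) := by
    intro xs
    simp only [g, prodD, prod_mul_distrib, prod_ite_eq', mem_univ, if_true]
  have marginal : ∀ j, ∑ y, g j y = if j = i then P x else 1 := by
    intro j
    split_ifs <;> simp [g, *, hP.2]
  simp only [factor, ← Fintype.prod_sum, marginal, prod_ite_eq', mem_univ, if_true]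

lemma IsProb.expect_prodD_empFreq {P : X → ℝ} (hP : IsProb P) (hn : 0 < n) (x : X) :
    expect (prodD P n) (fun xs => empFreq xs x) = P x := by
  simp only [expect, empFreq_eq_sum, mul_left_comm _ (n : ℝ)⁻¹, mul_sum]
  rw [sum_comm]
  simp only [← mul_sum, hP.sum_prodD_mul_ite, sum_const, card_univ, Fintype.card_fin,
    nsmul_eq_mul]
  field_simp

end SecondMoment

/-- Second moment method for total variation distance:
`‖P^{⊗n} − Q^{⊗n}‖_TV ≥ ‖P − Q‖₂² / (4 ∑_x Var(empirical frequency of x))`,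
where the variance is under the equiprobable mixture of the two product distributions. -/
theorem second_moment_method {X : Type*} [Fintype X] [DecidableEq X] {n : ℕ} (hn : 0 < n)
    (P Q : X → ℝ) (hP : IsProb P) (hQ : IsProb Q) :
    (∑ x, (P x - Q x) ^ 2) /
        (4 * ∑ x, varOf (fun xs => (prodD P n xs + prodD Q n xs) / 2)
          (fun xs => empFreq xs x)) ≤
      (1 / 2) * ∑ xs : Fin n → X, |prodD P n xs - prodD Q n xs| := by
  set μ : (Fin n → X) → ℝ := fun xs => (prodD P n xs + prodD Q n xs) / 2
  set T := ∑ xs : Fin n → X, |prodD P n xs - prodD Q n xs|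
  have per_symbol : ∀ x, (P x - Q x) ^ 2 ≤ 2 * T * varOf μ (fun xs => empFreq xs x) := fun x => by
    simpa only [hP.expect_prodD_empFreq hn, hQ.expect_prodD_empFreq hn] using
      sq_expect_sub_expect_le _ _ (fun xs : Fin n → X => empFreq xs x) hP.prodD_nonneg
        hQ.prodD_nonneg hP.sum_prodD hQ.sum_prodD
  have hμ0 : ∀ xs, 0 ≤ μ xs := fun xs => by
    have := hP.prodD_nonneg xs; have := hQ.prodD_nonneg xs; positivity
  have hμ : ∑ xs, μ xs = 1 := sum_mix_eq_one hP.sum_prodD hQ.sum_prodD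
  refine div_le_of_le_mul₀
    (mul_nonneg zero_le_four (sum_nonneg fun x _ => varOf_nonneg μ _ hμ0 hμ)) (by positivity) ?_
  calc ∑ x, (P x - Q x) ^ 2 ≤ ∑ x, 2 * T * varOf μ (fun xs => empFreq xs x) :=
        sum_le_sum fun x _ => per_symbol x
    _ = 1 / 2 * T * (4 * ∑ x, varOf μ (fun xs => empFreq xs x)) := by
        rw [← mul_sum]; ring
end

section
/- Monotonicity of noisy permutation channel capacity under degradation: if channel P_{Z₂|X} is a degraded version of channel P_{Z₁|X} (both with common finite input alphabet 𝒳), then every rate R achievable for the noisy permutation channel built from P_{Z₂|X} is also achievable for the noisy permutation channel built from P_{Z₁|X}; consequently C_perm(P_{Z₂|X}) ≤ C_perm(P_{Z₁|X}). -/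
open Filter

/-- End-to-end transition probability of the noisy permutation channel built from the
DMC `W`: the memoryless channel applied coordinatewise, followed by an independent
uniformly random permutation of the `n` coordinates. -/
noncomputable def npCh {X Z : Type*} (W : X → Z → ℝ) (n : ℕ)
    (x : Fin n → X) (z : Fin n → Z) : ℝ :=
  (1 / (n.factorial : ℝ)) * ∑ σ : Equiv.Perm (Fin n), ∏ i, W (x i) (z (σ i))

/-- Number of messages at blocklength `n` and rate `R`: `n^R` (rounded up). -/
noncomputable def msgCount (n : ℕ) (R : ℝ) : ℕ := ⌈(n : ℝ) ^ R⌉₊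

/-- Average probability of error of a (possibly randomized) encoder-decoder pair for the
noisy permutation channel built from `W`, with a uniform message. The decoder may
withhold mass (output the error symbol), so its rows sum to at most one. -/
noncomputable def avgPe {X Z : Type*} [Fintype X] [Fintype Z] (W : X → Z → ℝ)
    (n : ℕ) (R : ℝ) (enc : Fin (msgCount n R) → (Fin n → X) → ℝ)
    (dec : (Fin n → Z) → Fin (msgCount n R) → ℝ) : ℝ :=
  1 - (1 / (msgCount n R : ℝ)) *
    ∑ m, ∑ x, ∑ z, enc m x * npCh W n x z * dec z m

/-- A rate `R ≥ 0` is achievable for the noisy permutation channel built from `W` if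
there is a sequence of (possibly randomized) encoder-decoder pairs whose average
probability of error tends to zero. -/
noncomputable def Achievable {X Z : Type*} [Fintype X] [Fintype Z]
    (W : X → Z → ℝ) (R : ℝ) : Prop :=
  0 ≤ R ∧
  ∃ enc : (n : ℕ) → Fin (msgCount n R) → (Fin n → X) → ℝ,
  ∃ dec : (n : ℕ) → (Fin n → Z) → Fin (msgCount n R) → ℝ,
    (∀ n m, (∀ x, 0 ≤ enc n m x) ∧ ∑ x, enc n m x = 1) ∧
    (∀ n z, (∀ m, 0 ≤ dec n z m) ∧ ∑ m, dec n z m ≤ 1) ∧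
    Tendsto (fun n => avgPe W n R (enc n) (dec n)) atTop (nhds 0)

/-- The noisy permutation channel capacity of the DMC `W`. -/
noncomputable def Cperm {X Z : Type*} [Fintype X] [Fintype Z] (W : X → Z → ℝ) : ℝ :=
  sSup {R : ℝ | Achievable W R}

section helpers

lemma sum_fn_prod {Z : Type*} [Fintype Z] (n : ℕ) (g : Fin n → Z → ℝ) :
    ∑ z : Fin n → Z, ∏ i, g i (z i) = ∏ i, ∑ c, g i c :=
  (Fintype.prod_sum g).symm

lemma sum_comp_perm_prod {Z : Type*} [Fintype Z] (n : ℕ) (σ : Equiv.Perm (Fin n))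
    (g : Fin n → Z → ℝ) :
    ∑ z : Fin n → Z, ∏ i, g i (z (σ i)) = ∑ z : Fin n → Z, ∏ i, g i (z i) := by
  apply Fintype.sum_equiv (Equiv.arrowCongr σ.symm (Equiv.refl Z))
  intro z
  simp [Equiv.arrowCongr]

lemma npCh_nonneg {X Z : Type*} (W : X → Z → ℝ) (hW : ∀ x z, 0 ≤ W x z) (n : ℕ)
    (x : Fin n → X) (z : Fin n → Z) : 0 ≤ npCh W n x z := by
  unfold npCh
  have h : (0:ℝ) ≤ 1 / (n.factorial : ℝ) := by positivity
  exact mul_nonneg h (Finset.sum_nonneg fun σ _ => Finset.prod_nonneg fun i _ => hW _ _)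

lemma sum_npCh {X Z : Type*} [Fintype Z] (W : X → Z → ℝ) (hW : RowStochastic W) (n : ℕ)
    (x : Fin n → X) : ∑ z, npCh W n x z = 1 := by
  unfold npCh
  rw [← Finset.mul_sum, Finset.sum_comm]
  have h : ∀ σ : Equiv.Perm (Fin n),
      ∑ z : Fin n → Z, ∏ i, W (x i) (z (σ i)) = 1 := by
    intro σ
    rw [sum_comp_perm_prod, sum_fn_prod]
    simp [hW.2]
  simp only [h, Finset.sum_const, Finset.card_univ, Fintype.card_perm, nsmul_eq_mul,
    mul_one]
  rw [Fintype.card_fin, one_div, inv_mul_cancel₀]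
  exact_mod_cast Nat.factorial_ne_zero n

lemma npCh_comp_perm {X Z : Type*} (W : X → Z → ℝ) (n : ℕ) (x : Fin n → X)
    (z : Fin n → Z) (π : Equiv.Perm (Fin n)) : npCh W n x (z ∘ π) = npCh W n x z := by
  unfold npCh
  congr 1
  apply Fintype.sum_equiv (Equiv.mulLeft π)
  intro σ
  simp [Equiv.Perm.mul_apply]

lemma key_deg {X Z₁ Z₂ : Type*} [Fintype Z₁] [Fintype Z₂]
    (W₁ : X → Z₁ → ℝ) (W₂ : X → Z₂ → ℝ) (V : Z₁ → Z₂ → ℝ)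
    (hd : ∀ x z₂, W₂ x z₂ = ∑ z₁, W₁ x z₁ * V z₁ z₂) (n : ℕ)
    (x : Fin n → X) (z₂ : Fin n → Z₂) :
    ∑ z₁ : Fin n → Z₁, npCh W₁ n x z₁ * ∏ i, V (z₁ i) (z₂ i) = npCh W₂ n x z₂ := by
  unfold npCh
  have hσ : ∀ σ : Equiv.Perm (Fin n),
      ∑ z₁ : Fin n → Z₁, (∏ i, W₁ (x i) (z₁ (σ i))) * ∏ i, V (z₁ i) (z₂ i)
        = ∏ i, W₂ (x i) (z₂ (σ i)) := by
    intro σ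
    have h1 : ∀ z₁ : Fin n → Z₁,
        (∏ i, W₁ (x i) (z₁ (σ i))) * ∏ i, V (z₁ i) (z₂ i)
          = ∏ i, (W₁ (x i) (z₁ (σ i)) * V (z₁ (σ i)) (z₂ (σ i))) := by
      intro z₁
      rw [← Equiv.prod_comp σ (fun i => V (z₁ i) (z₂ i)), ← Finset.prod_mul_distrib]
    simp_rw [h1]
    rw [sum_comp_perm_prod n σ (fun i w => W₁ (x i) w * V w (z₂ (σ i))),
      sum_fn_prod n (fun i w => W₁ (x i) w * V w (z₂ (σ i)))]
    exact Finset.prod_congr rfl fun i _ => (hd (x i) (z₂ (σ i))).symm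
  simp_rw [mul_assoc, ← Finset.mul_sum, Finset.sum_mul]
  rw [Finset.sum_comm]
  simp_rw [hσ]

lemma achievable_mono {X Z₁ Z₂ : Type*} [Fintype X] [Fintype Z₁] [Fintype Z₂]
    (W₁ : X → Z₁ → ℝ) (W₂ : X → Z₂ → ℝ) (V : Z₁ → Z₂ → ℝ) (hV : RowStochastic V)
    (hd : ∀ x z₂, W₂ x z₂ = ∑ z₁, W₁ x z₁ * V z₁ z₂) (R : ℝ) :
    Achievable W₂ R → Achievable W₁ R := by
  rintro ⟨hR, enc, dec, henc, hdec, hP⟩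
  refine ⟨hR, enc, fun n z₁ m => ∑ z₂, (∏ i, V (z₁ i) (z₂ i)) * dec n z₂ m, henc,
    ?_, ?_⟩
  · intro n z₁
    constructor
    · intro m
      exact Finset.sum_nonneg fun z₂ _ =>
        mul_nonneg (Finset.prod_nonneg fun i _ => hV.1 _ _) ((hdec n z₂).1 m)
    · rw [Finset.sum_comm]
      have h1 : ∑ z₂ : Fin n → Z₂, ∑ m, (∏ i, V (z₁ i) (z₂ i)) * dec n z₂ m
          = ∑ z₂ : Fin n → Z₂, (∏ i, V (z₁ i) (z₂ i)) * ∑ m, dec n z₂ m := by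
        simp_rw [Finset.mul_sum]
      rw [h1]
      calc ∑ z₂ : Fin n → Z₂, (∏ i, V (z₁ i) (z₂ i)) * ∑ m, dec n z₂ m
          ≤ ∑ z₂ : Fin n → Z₂, (∏ i, V (z₁ i) (z₂ i)) * 1 :=
            Finset.sum_le_sum fun z₂ _ => mul_le_mul_of_nonneg_left (hdec n z₂).2
              (Finset.prod_nonneg fun i _ => hV.1 _ _)
        _ = 1 := by
            simp_rw [mul_one]
            rw [sum_fn_prod n (fun i w => V (z₁ i) w)]
            simp [hV.2]
  · have heq : ∀ n, avgPe W₁ n R (enc n)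
        (fun z₁ m => ∑ z₂, (∏ i, V (z₁ i) (z₂ i)) * dec n z₂ m)
        = avgPe W₂ n R (enc n) (dec n) := by
      intro n
      unfold avgPe
      congr 1
      congr 1
      apply Finset.sum_congr rfl
      intro m _
      apply Finset.sum_congr rfl
      intro x _
      have claim : ∑ z₁ : Fin n → Z₁, npCh W₁ n x z₁ *
            (∑ z₂, (∏ i, V (z₁ i) (z₂ i)) * dec n z₂ m)
          = ∑ z₂ : Fin n → Z₂, npCh W₂ n x z₂ * dec n z₂ m := by
        simp_rw [Finset.mul_sum]
        rw [Finset.sum_comm]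
        apply Finset.sum_congr rfl
        intro z₂ _
        simp_rw [← mul_assoc, ← Finset.sum_mul]
        rw [key_deg W₁ W₂ V hd n x z₂]
      calc ∑ z₁, enc n m x * npCh W₁ n x z₁ *
            (∑ z₂, (∏ i, V (z₁ i) (z₂ i)) * dec n z₂ m)
          = enc n m x * ∑ z₁, npCh W₁ n x z₁ *
            (∑ z₂, (∏ i, V (z₁ i) (z₂ i)) * dec n z₂ m) := by
            simp_rw [mul_assoc, ← Finset.mul_sum]
        _ = enc n m x * ∑ z₂, npCh W₂ n x z₂ * dec n z₂ m := by rw [claim]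
        _ = ∑ z₂, enc n m x * npCh W₂ n x z₂ * dec n z₂ m := by
            simp_rw [mul_assoc, ← Finset.mul_sum]
    have heq2 : (fun n => avgPe W₁ n R (enc n)
        (fun z₁ m => ∑ z₂, (∏ i, V (z₁ i) (z₂ i)) * dec n z₂ m))
        = fun n => avgPe W₂ n R (enc n) (dec n) := funext heq
    rw [heq2]
    exact hP

lemma mono_count_iff {Z : Type*} [Fintype Z] {n : ℕ} [LinearOrder Z] {w : Fin n → Z}
    (hw : Monotone w) (i : Fin n) (t : Z) :
    w i ≤ t ↔ (i : ℕ) < (Finset.univ.filter (fun j => w j ≤ t)).card := by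
  classical
  constructor
  · intro h
    have hsub : Finset.Iic i ⊆ Finset.univ.filter (fun j => w j ≤ t) := by
      intro j hj
      simp only [Finset.mem_filter, Finset.mem_univ, true_and]
      exact le_trans (hw (Finset.mem_Iic.mp hj)) h
    have hcard := Finset.card_le_card hsub
    rw [Fin.card_Iic] at hcard
    omega
  · intro h
    by_contra hc
    push_neg at hc
    have hsub : Finset.univ.filter (fun j => w j ≤ t) ⊆ Finset.Iio i := by
      intro j hj
      simp only [Finset.mem_filter, Finset.mem_univ, true_and] at hj
      rw [Finset.mem_Iio]
      by_contra hji
      push_neg at hji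
      exact absurd (le_trans (hw hji) hj) (not_le.mpr hc)
    have hcard := Finset.card_le_card hsub
    rw [Fin.card_Iio] at hcard
    omega

lemma mono_inj {Z : Type*} [Fintype Z] {n : ℕ} [LinearOrder Z] {w w' : Fin n → Z}
    (hw : Monotone w) (hw' : Monotone w')
    (h : ∀ t : Z, (Finset.univ.filter (fun j => w j ≤ t)).card
      = (Finset.univ.filter (fun j => w' j ≤ t)).card) : w = w' := by
  classical
  funext i
  refine le_antisymm ?_ ?_
  · rw [mono_count_iff hw i (w' i), h]
    exact (mono_count_iff hw' i (w' i)).mp le_rfl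
  · rw [mono_count_iff hw' i (w i), ← h]
    exact (mono_count_iff hw i (w i)).mp le_rfl

lemma card_mono_image {Z : Type*} [Fintype Z] {n : ℕ} [LinearOrder Z]
    (s : Finset (Fin n → Z)) (hs : ∀ w ∈ s, Monotone w) :
    s.card ≤ (n + 1) ^ Fintype.card Z := by
  classical
  have h : s.card ≤ Fintype.card (Z → Fin (n + 1)) := by
    apply Finset.card_le_card_of_injOn
      (fun w t => (⟨(Finset.univ.filter (fun j => w j ≤ t)).card, by
        have h2 := Finset.card_filter_le (Finset.univ : Finset (Fin n))
          (fun j => w j ≤ t)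
        simp only [Finset.card_univ, Fintype.card_fin] at h2
        omega⟩ : Fin (n + 1)))
    · intro w _; exact Finset.mem_univ _
    · intro w hw w' hw' hww'
      apply mono_inj (hs w hw) (hs w' hw')
      intro t
      exact congrArg Fin.val (congrFun hww' t)
  calc s.card ≤ Fintype.card (Z → Fin (n + 1)) := h
    _ = (n + 1) ^ Fintype.card Z := by
        rw [Fintype.card_fun, Fintype.card_fin]

lemma success_bound {X Z : Type*} [Fintype X] [Fintype Z] (W : X → Z → ℝ)
    (hW : RowStochastic W) {n : ℕ} (hn : 1 ≤ n) (R : ℝ)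
    (enc : Fin (msgCount n R) → (Fin n → X) → ℝ)
    (dec : (Fin n → Z) → Fin (msgCount n R) → ℝ)
    (henc : ∀ m, (∀ x, 0 ≤ enc m x) ∧ ∑ x, enc m x = 1)
    (hdec : ∀ z, (∀ m, 0 ≤ dec z m) ∧ ∑ m, dec z m ≤ 1) :
    ∑ m, ∑ x, ∑ z, enc m x * npCh W n x z * dec z m
      ≤ ((n + 1 : ℕ) : ℝ) ^ Fintype.card Z := by
  classical
  letI : LinearOrder Z := LinearOrder.lift' (Fintype.equivFin Z)
    (Fintype.equivFin Z).injective
  have hM1 : 1 ≤ msgCount n R := by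
    unfold msgCount
    have hp : (0:ℝ) < (n : ℝ) ^ R :=
      Real.rpow_pos_of_pos (by exact_mod_cast hn : (0:ℝ) < (n:ℝ)) R
    have := Nat.ceil_pos.mpr hp
    omega
  have hMne : (Finset.univ : Finset (Fin (msgCount n R))).Nonempty :=
    ⟨⟨0, hM1⟩, Finset.mem_univ _⟩
  set a : Fin (msgCount n R) → (Fin n → Z) → ℝ :=
    fun m z => ∑ x, enc m x * npCh W n x z with ha
  have ha_nonneg : ∀ m z, 0 ≤ a m z := fun m z =>
    Finset.sum_nonneg fun x _ => mul_nonneg ((henc m).1 x) (npCh_nonneg W hW.1 n x z)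
  have ha_sum : ∀ m, ∑ z, a m z = 1 := by
    intro m
    simp only [ha]
    rw [Finset.sum_comm]
    simp_rw [← Finset.mul_sum, sum_npCh W hW n, mul_one]
    exact (henc m).2
  set c : (Fin n → Z) → (Fin n → Z) := fun z => z ∘ Tuple.sort z with hc
  have ha_c : ∀ m z, a m z = a m (c z) := by
    intro m z
    simp only [ha, hc]
    exact Finset.sum_congr rfl fun x _ => by
      rw [npCh_comp_perm W n x z (Tuple.sort z)]
  set G : (Fin n → Z) → ℝ :=
    fun z => Finset.univ.sup' hMne (fun m => a m z) with hG
  have hGc : ∀ z, G z = G (c z) := by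
    intro z
    simp only [hG]
    exact congrArg (Finset.univ.sup' hMne) (funext fun m => ha_c m z)
  have stepA : ∑ m, ∑ x, ∑ z, enc m x * npCh W n x z * dec z m ≤ ∑ z, G z := by
    have h1 : ∑ m, ∑ x, ∑ z, enc m x * npCh W n x z * dec z m
        = ∑ z, ∑ m, a m z * dec z m := by
      have e1 : ∀ m : Fin (msgCount n R),
          ∑ x, ∑ z, enc m x * npCh W n x z * dec z m = ∑ z, a m z * dec z m := by
        intro m
        rw [Finset.sum_comm]
        apply Finset.sum_congr rfl
        intro z _
        simp only [ha]
        rw [Finset.sum_mul]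
      simp_rw [e1]
      rw [Finset.sum_comm]
    rw [h1]
    apply Finset.sum_le_sum
    intro z _
    calc ∑ m, a m z * dec z m
        ≤ ∑ m, G z * dec z m := Finset.sum_le_sum fun m _ =>
          mul_le_mul_of_nonneg_right
            (Finset.le_sup' (fun m => a m z) (Finset.mem_univ m)) ((hdec z).1 m)
      _ = G z * ∑ m, dec z m := by rw [Finset.mul_sum]
      _ ≤ G z * 1 := mul_le_mul_of_nonneg_left (hdec z).2
          (le_trans (ha_nonneg ⟨0, hM1⟩ z)
            (Finset.le_sup' (fun m => a m z) (Finset.mem_univ _)))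
      _ = G z := mul_one _
  have stepB : ∑ z, G z ≤ (((n + 1) ^ Fintype.card Z : ℕ) : ℝ) := by
    have h2 : ∑ z : Fin n → Z, G z = ∑ z : Fin n → Z, G (c z) :=
      Finset.sum_congr rfl fun z _ => hGc z
    rw [h2, Finset.sum_comp G c]
    have h3 : ∀ w ∈ Finset.univ.image c,
        ((Finset.univ.filter (fun z => c z = w)).card : ℕ) • G w ≤ 1 := by
      intro w hw
      obtain ⟨m₀, -, hm₀⟩ := Finset.exists_mem_eq_sup' hMne (fun m => a m w)
      have hfib : ∀ z ∈ Finset.univ.filter (fun z => c z = w), a m₀ z = a m₀ w := by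
        intro z hz
        rw [Finset.mem_filter] at hz
        rw [ha_c m₀ z, hz.2]
      have h4 : ((Finset.univ.filter (fun z => c z = w)).card : ℕ) • G w
          = ∑ z ∈ Finset.univ.filter (fun z => c z = w), a m₀ z := by
        rw [Finset.sum_congr rfl hfib, Finset.sum_const]
        simp only [hG]
        rw [hm₀]
      rw [h4]
      calc ∑ z ∈ Finset.univ.filter (fun z => c z = w), a m₀ z
          ≤ ∑ z : Fin n → Z, a m₀ z :=
            Finset.sum_le_sum_of_subset_of_nonneg (Finset.filter_subset _ _)
              (fun z _ _ => ha_nonneg m₀ z)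
        _ = 1 := ha_sum m₀
    calc ∑ w ∈ Finset.univ.image c,
          ((Finset.univ.filter (fun z => c z = w)).card : ℕ) • G w
        ≤ ∑ _w ∈ Finset.univ.image c, (1:ℝ) := Finset.sum_le_sum h3
      _ = ((Finset.univ.image c).card : ℝ) := by simp
      _ ≤ (((n + 1) ^ Fintype.card Z : ℕ) : ℝ) := by
          have hmono : ∀ w ∈ Finset.univ.image c, Monotone w := by
            intro w hw
            obtain ⟨z, -, rfl⟩ := Finset.mem_image.mp hw
            simp only [hc]
            exact Tuple.monotone_sort z
          exact_mod_cast card_mono_image (Finset.univ.image c) hmono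
  calc ∑ m, ∑ x, ∑ z, enc m x * npCh W n x z * dec z m
      ≤ ∑ z, G z := stepA
    _ ≤ (((n + 1) ^ Fintype.card Z : ℕ) : ℝ) := stepB
    _ = ((n + 1 : ℕ) : ℝ) ^ Fintype.card Z := by push_cast; ring

end helpers

lemma achievable_le {X Z : Type*} [Fintype X] [Fintype Z] (W : X → Z → ℝ)
    (hW : RowStochastic W) (R : ℝ) (h : Achievable W R) :
    R ≤ (Fintype.card Z : ℝ) + 1 := by
  by_contra hcon
  push_neg at hcon
  obtain ⟨hR, enc, dec, henc, hdec, hP⟩ := h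
  set d := Fintype.card Z with hd
  have main : ∀ n : ℕ, 1 ≤ n →
      1 - ((n:ℝ)+1)^d / (n:ℝ)^R ≤ avgPe W n R (enc n) (dec n) := by
    intro n hn
    have hnpos : (0:ℝ) < (n:ℝ) := by exact_mod_cast hn
    have hS := success_bound W hW hn R (enc n) (dec n) (henc n) (hdec n)
    have hMre : ((n:ℝ))^R ≤ (msgCount n R : ℝ) := Nat.le_ceil _
    have hrpos : (0:ℝ) < (n:ℝ)^R := Real.rpow_pos_of_pos hnpos R
    have hMpos : (0:ℝ) < (msgCount n R : ℝ) := lt_of_lt_of_le hrpos hMre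
    unfold avgPe
    have hkey : (1 / (msgCount n R : ℝ)) *
        (∑ m, ∑ x, ∑ z, enc n m x * npCh W n x z * dec n z m)
        ≤ ((n:ℝ)+1)^d / (n:ℝ)^R := by
      calc (1 / (msgCount n R : ℝ)) *
            (∑ m, ∑ x, ∑ z, enc n m x * npCh W n x z * dec n z m)
          ≤ (1 / (msgCount n R : ℝ)) * (((n + 1 : ℕ) : ℝ) ^ d) := by
            apply mul_le_mul_of_nonneg_left hS
            positivity
        _ = (((n + 1 : ℕ) : ℝ) ^ d) / (msgCount n R : ℝ) := by ring
        _ ≤ (((n + 1 : ℕ) : ℝ) ^ d) / (n:ℝ)^R := by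
            apply div_le_div_of_nonneg_left _ hrpos hMre
            positivity
        _ = ((n:ℝ)+1)^d / (n:ℝ)^R := by push_cast; ring
    linarith
  have hf0 : Tendsto (fun n : ℕ => ((n:ℝ)+1)^d / (n:ℝ)^R) atTop (nhds 0) := by
    have hg : Tendsto (fun n : ℕ => (2:ℝ)^d * (n:ℝ)^((d:ℝ) - R)) atTop (nhds 0) := by
      have h1 : Tendsto (fun x : ℝ => x ^ ((d:ℝ) - R)) atTop (nhds 0) := by
        have hpos : (0:ℝ) < R - (d:ℝ) := by linarith
        have h2 := tendsto_rpow_neg_atTop hpos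
        simpa [neg_sub] using h2
      have h3 : Tendsto (fun n : ℕ => ((n:ℝ)) ^ ((d:ℝ) - R)) atTop (nhds 0) :=
        h1.comp tendsto_natCast_atTop_atTop
      have h4 := h3.const_mul ((2:ℝ)^d)
      simpa using h4
    apply squeeze_zero' (Filter.Eventually.of_forall (fun n => by positivity))
      _ hg
    rw [Filter.eventually_atTop]
    refine ⟨1, fun n hn => ?_⟩
    have hnpos : (0:ℝ) < (n:ℝ) := by exact_mod_cast hn
    have hn1 : (1:ℝ) ≤ (n:ℝ) := by exact_mod_cast hn
    calc ((n:ℝ)+1)^d / (n:ℝ)^R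
        ≤ ((2:ℝ)*(n:ℝ))^d / (n:ℝ)^R := by gcongr; linarith
      _ = (2:ℝ)^d * ((n:ℝ)^(d:ℕ) / (n:ℝ)^R) := by rw [mul_pow]; ring
      _ = (2:ℝ)^d * (n:ℝ)^((d:ℝ) - R) := by
          rw [← Real.rpow_natCast (n:ℝ) d, ← Real.rpow_sub hnpos]
  have h1le : Tendsto (fun n : ℕ => 1 - ((n:ℝ)+1)^d / (n:ℝ)^R) atTop (nhds 1) := by
    have := tendsto_const_nhds (x := (1:ℝ)) (f := atTop (α := ℕ)) |>.sub hf0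
    simpa using this
  have hcontra : (1:ℝ) ≤ 0 := by
    apply le_of_tendsto_of_tendsto h1le hP
    rw [Filter.EventuallyLE, Filter.eventually_atTop]
    exact ⟨1, fun n hn => main n hn⟩
  linarith


/-- Monotonicity of noisy permutation channel capacity under degradation: if `W₂` is a
degraded version of `W₁`, then every achievable rate for the noisy permutation channel
built from `W₂` is achievable for the one built from `W₁`, and hence
`C_perm(W₂) ≤ C_perm(W₁)`. -/
theorem cperm_monotone_degradation {X Z₁ Z₂ : Type*}
    [Fintype X] [Fintype Z₁] [Fintype Z₂]
    (W₁ : X → Z₁ → ℝ) (W₂ : X → Z₂ → ℝ)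
    (hW₁ : RowStochastic W₁) (hW₂ : RowStochastic W₂)
    (hdeg : ∃ V : Z₁ → Z₂ → ℝ, RowStochastic V ∧
      ∀ x z₂, W₂ x z₂ = ∑ z₁, W₁ x z₁ * V z₁ z₂) :
    (∀ R : ℝ, Achievable W₂ R → Achievable W₁ R) ∧ Cperm W₂ ≤ Cperm W₁ := by
  obtain ⟨V, hV, hd⟩ := hdeg
  have htrans : ∀ R : ℝ, Achievable W₂ R → Achievable W₁ R :=
    fun R => achievable_mono W₁ W₂ V hV hd R
  refine ⟨htrans, ?_⟩
  have hbdd : BddAbove {R : ℝ | Achievable W₁ R} :=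
    ⟨(Fintype.card Z₁ : ℝ) + 1, fun R hR => achievable_le W₁ hW₁ R hR⟩
  rcases Set.eq_empty_or_nonempty {R : ℝ | Achievable W₂ R} with he | hne
  · unfold Cperm
    rw [he, Real.sSup_empty]
    rcases Set.eq_empty_or_nonempty {R : ℝ | Achievable W₁ R} with he1 | hne1
    · rw [he1, Real.sSup_empty]
    · obtain ⟨R, hR⟩ := hne1
      have h0R : 0 ≤ R := by
        have hR' : Achievable W₁ R := hR
        unfold Achievable at hR'
        exact hR'.1
      exact le_trans h0R (le_csSup hbdd hR)
  · exact csSup_le_csSup hbdd hne (fun R hR => htrans R hR)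
end
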